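/- Let D be an optimum [ns,k]_s-distribution in base q with s ≤ k ≤ ns. Then every elementary box Δ^M_A ∈ E_s(q,n) with a_1+...+a_n ≤ k contains exactly q^{k - a_1 - ... - a_n} points of D, and every elementary box with a_1+...+a_n > k contains at most one point of D. Consequently D is a (k-s, k, n)-net in base q. -/

import Mathlib

/-- The number of points of `D` in the elementary box
`Π_j [m_j / q^{a_j}, (m_j + 1) / q^{a_j})`. -/
noncomputable def boxCount {n : ℕ} (q : ℕ) (D : Finset (Fin n → ℝ))
    (A m : Fin n → ℕ) : ℕ :=
  (D.filter fun X => ∀ j, (m j : ℝ) / (q : ℝ) ^ (A j) ≤ X j ∧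
    X j < ((m j : ℝ) + 1) / (q : ℝ) ^ (A j)).card

/-!
An elementary box with exponents `A` is tiled by the `q ^ (|A'| - |A|)` elementary boxes with
exponents `A' ≥ A` inside it. When `|A| ≤ k` and `A ≤ s`, one can pick `A ≤ A' ≤ s` with
`|A'| = k`; optimality puts exactly one point in each tile, so the box holds `q ^ (k - |A|)`
points. When `|A| > k`, the box lies inside a single box with exponents `A' ≤ A`, `|A'| = k`,
which holds one point. Boxes with `|A| = s` have all `a_j ≤ s ≤ k`, whence the net property.
-/

open Finset

lemma Finset.exists_le_le_sum_eq {ι : Type*} [DecidableEq ι] {L U : ι → ℕ} (hLU : L ≤ U)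
    (s : Finset ι) {k : ℕ} (hL : ∑ i ∈ s, L i ≤ k) (hU : k ≤ ∑ i ∈ s, U i) :
    ∃ A : ι → ℕ, L ≤ A ∧ A ≤ U ∧ ∑ i ∈ s, A i = k := by
  induction s using Finset.induction_on generalizing k with
  | empty => exact ⟨L, le_rfl, hLU, by simp_all⟩
  | insert i s hi ih =>
    rw [sum_insert hi] at hL hU
    have hLUs : ∑ j ∈ s, L j ≤ ∑ j ∈ s, U j := sum_le_sum fun j _ => hLU j
    -- This choice of `A i` leaves a target `k - a` between `∑ L` and `∑ U` over `s`.
    set a := min (U i) (k - ∑ j ∈ s, L j) with ha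
    obtain ⟨A, hLA, hAU, hA⟩ := ih (k := k - a) (by omega) (by omega)
    refine ⟨Function.update A i a, fun j => ?_, fun j => ?_, ?_⟩
    · rcases eq_or_ne j i with rfl | hj
      · simpa [ha] using ⟨hLU j, by omega⟩
      · simpa [hj] using hLA j
    · rcases eq_or_ne j i with rfl | hj
      · simp [ha]
      · simpa [hj] using hAU j
    · rw [sum_insert hi, Function.update_self, sum_update_of_notMem hi, hA]
      omega

section ElementaryBoxes

variable {n q : ℕ} {D : Finset (Fin n → ℝ)}

/-- The digits `m` of the elementary box with exponents `A` containing `X`; this matches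
`boxCount` only for points with nonnegative coordinates, as `⌊·⌋₊` sends negatives to `0`. -/
noncomputable def boxIndex (q : ℕ) (A : Fin n → ℕ) (X : Fin n → ℝ) : Fin n → ℕ :=
  fun j => ⌊X j * (q : ℝ) ^ A j⌋₊

lemma boxCount_eq_card_boxIndex_eq (hq : 0 < q)
    (hD : ∀ X ∈ D, ∀ j, 0 ≤ X j) (A m : Fin n → ℕ) :
    boxCount q D A m = #{X ∈ D | boxIndex q A X = m} := by
  unfold boxCount
  congr 1
  refine filter_congr fun X hX => ?_
  rw [funext_iff]
  refine forall_congr' fun j => ?_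
  have hqA : (0 : ℝ) < (q : ℝ) ^ A j := by positivity
  rw [boxIndex, Nat.floor_eq_iff (by have := hD X hX j; positivity), div_le_iff₀ hqA,
    lt_div_iff₀ hqA]

lemma boxIndex_eq_div_of_le (hq : 0 < q) {A A' : Fin n → ℕ} (hA : A ≤ A') (X : Fin n → ℝ)
    (j : Fin n) : boxIndex q A X j = boxIndex q A' X j / q ^ (A' j - A j) := by
  have hsplit :
      X j * (q : ℝ) ^ A j = X j * (q : ℝ) ^ A' j / ((q ^ (A' j - A j) : ℕ) : ℝ) := by
    rw [eq_div_iff (by positivity), Nat.cast_pow, mul_assoc, ← pow_add,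
      Nat.add_sub_cancel' (hA j)]
  rw [boxIndex, boxIndex, hsplit, Nat.floor_div_natCast]

/-- The digits of the boxes with exponents `A' ≥ A` that tile the box `(A, m)`. -/
def subboxIndices (q : ℕ) (A A' m : Fin n → ℕ) : Finset (Fin n → ℕ) :=
  Fintype.piFinset fun j => Ico (m j * q ^ (A' j - A j)) ((m j + 1) * q ^ (A' j - A j))

lemma mem_subboxIndices_iff (hq : 0 < q) {A A' m m' : Fin n → ℕ} :
    m' ∈ subboxIndices q A A' m ↔ ∀ j, m' j / q ^ (A' j - A j) = m j := by
  simp only [subboxIndices, Fintype.mem_piFinset, mem_Ico]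
  refine forall_congr' fun j => ?_
  have hpos := Nat.pow_pos (n := A' j - A j) hq
  rw [Nat.div_eq_iff hpos, add_mul, one_mul]
  omega

lemma card_subboxIndices (q : ℕ) {A A' : Fin n → ℕ} (hA : A ≤ A') (m : Fin n → ℕ) :
    #(subboxIndices q A A' m) = q ^ (∑ j, A' j - ∑ j, A j) := by
  simp only [subboxIndices, Fintype.card_piFinset, Nat.card_Ico, add_mul, one_mul,
    Nat.add_sub_cancel_left]
  rw [prod_pow_eq_pow_sum, sum_tsub_distrib _ fun j _ => hA j]

lemma lt_pow_of_mem_subboxIndices (hq : 0 < q) {A A' m m' : Fin n → ℕ} (hA : A ≤ A')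
    (hm : ∀ j, m j < q ^ A j) (hm' : m' ∈ subboxIndices q A A' m) (j : Fin n) :
    m' j < q ^ A' j := by
  have hdiv := (mem_subboxIndices_iff hq).mp hm' j
  have hlt := (Nat.div_lt_iff_lt_mul (Nat.pow_pos hq)).mp (hdiv ▸ hm j)
  rwa [← pow_add, Nat.add_sub_cancel' (hA j)] at hlt

lemma boxCount_eq_sum_subboxIndices (hq : 0 < q)
    (hD : ∀ X ∈ D, ∀ j, 0 ≤ X j) {A A' : Fin n → ℕ} (hA : A ≤ A')
    (m : Fin n → ℕ) :
    boxCount q D A m = ∑ m' ∈ subboxIndices q A A' m, boxCount q D A' m' := by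
  have hmaps :
      ∀ X ∈ {X ∈ D | boxIndex q A X = m}, boxIndex q A' X ∈ subboxIndices q A A' m := by
    intro X hX
    rw [mem_subboxIndices_iff hq]
    exact fun j => by rw [← boxIndex_eq_div_of_le hq hA, (mem_filter.mp hX).2]
  rw [boxCount_eq_card_boxIndex_eq hq hD, card_eq_sum_card_fiberwise hmaps]
  refine sum_congr rfl fun m' hm' => ?_
  rw [boxCount_eq_card_boxIndex_eq hq hD, filter_filter]
  congr 1
  refine filter_congr fun X _ => and_iff_right_of_imp ?_
  rintro rfl
  exact funext fun j => (boxIndex_eq_div_of_le hq hA X j).trans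
    ((mem_subboxIndices_iff hq).mp hm' j)

lemma boxCount_le_boxCount_of_le (hq : 0 < q)
    (hD : ∀ X ∈ D, ∀ j, 0 ≤ X j) {A A' : Fin n → ℕ} (hA : A' ≤ A)
    (m : Fin n → ℕ) :
    boxCount q D A m ≤ boxCount q D A' fun j => m j / q ^ (A j - A' j) := by
  rw [boxCount_eq_card_boxIndex_eq hq hD, boxCount_eq_card_boxIndex_eq hq hD]
  refine card_le_card (monotone_filter_right _ fun X _ hX => ?_)
  rw [← hX]
  exact funext (boxIndex_eq_div_of_le hq hA X)

lemma boxCount_eq_pow_of_boxCount_eq_one (hq : 0 < q)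
    (hD : ∀ X ∈ D, ∀ j, 0 ≤ X j) {A A' m : Fin n → ℕ} (hA : A ≤ A')
    (hm : ∀ j, m j < q ^ A j)
    (hone : ∀ m' : Fin n → ℕ, (∀ j, m' j < q ^ A' j) → boxCount q D A' m' = 1) :
    boxCount q D A m = q ^ (∑ j, A' j - ∑ j, A j) := by
  rw [boxCount_eq_sum_subboxIndices hq hD hA,
    sum_congr rfl fun m' hm' => hone m' (lt_pow_of_mem_subboxIndices hq hA hm hm'),
    sum_const, smul_eq_mul, mul_one, card_subboxIndices q hA]

end ElementaryBoxes

theorem optimum_distribution_counts_and_net_general {n q s k : ℕ} (hq : 2 ≤ q)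
    (hsk : s ≤ k) (hkn : k ≤ n * s) (D : Finset (Fin n → ℝ))
    (hcube : ∀ X ∈ D, ∀ j, 0 ≤ X j ∧ X j < 1)
    (hopt : ∀ A m : Fin n → ℕ, (∀ j, A j ≤ s) → (∑ j, A j) = k →
      (∀ j, m j < q ^ (A j)) → boxCount q D A m = 1) :
    (∀ A m : Fin n → ℕ, (∀ j, A j ≤ s) → (∑ j, A j) ≤ k →
        (∀ j, m j < q ^ (A j)) → boxCount q D A m = q ^ (k - ∑ j, A j)) ∧
    (∀ A m : Fin n → ℕ, (∀ j, A j ≤ s) → k < (∑ j, A j) →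
        (∀ j, m j < q ^ (A j)) → boxCount q D A m ≤ 1) ∧
    (∀ A m : Fin n → ℕ, (∑ j, A j) = s → (∀ j, m j < q ^ (A j)) →
        boxCount q D A m = q ^ (k - s)) := by
  have hq0 : 0 < q := by omega
  have hD : ∀ X ∈ D, ∀ j, 0 ≤ X j := fun X hX j => (hcube X hX j).1
  have counts : ∀ A m : Fin n → ℕ, (∀ j, A j ≤ s) → (∑ j, A j) ≤ k →
      (∀ j, m j < q ^ (A j)) → boxCount q D A m = q ^ (k - ∑ j, A j) := by
    intro A m hAs hAk hm
    obtain ⟨A', hAA', hA's, hA'k⟩ := exists_le_le_sum_eq (U := fun _ => s) hAs univ hAk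
      (by simpa [mul_comm] using hkn)
    rw [boxCount_eq_pow_of_boxCount_eq_one hq0 hD hAA' hm fun m' => hopt A' m' hA's hA'k, hA'k]
  refine ⟨counts, fun A m hAs hkA hm => ?_, fun A m hAs hm => ?_⟩
  · obtain ⟨A', -, hA'A, hA'k⟩ :=
      exists_le_le_sum_eq (L := 0) (fun j => Nat.zero_le (A j)) univ (by simp) hkA.le
    calc boxCount q D A m ≤ boxCount q D A' fun j => m j / q ^ (A j - A' j) :=
          boxCount_le_boxCount_of_le hq0 hD hA'A m
      _ = 1 := hopt A' _ (fun j => (hA'A j).trans (hAs j)) hA'k fun j =>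
          Nat.div_lt_of_lt_mul (by rw [← pow_add, Nat.sub_add_cancel (hA'A j)]; exact hm j)
  · have hAs' : ∀ j, A j ≤ s := fun j =>
      hAs ▸ single_le_sum (fun i _ => Nat.zero_le (A i)) (mem_univ j)
    rw [counts A m hAs' (hAs.trans_le hsk) hm, hAs]

theorem optimum_distribution_counts_and_net {n q s k : ℕ} (hq : 2 ≤ q)
    (hsk : s ≤ k) (hkn : k ≤ n * s) (D : Finset (Fin n → ℝ))
    (hcube : ∀ X ∈ D, ∀ j, 0 ≤ X j ∧ X j < 1) (hcard : D.card = q ^ k)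
    (hopt : ∀ A m : Fin n → ℕ, (∀ j, A j ≤ s) → (∑ j, A j) = k →
      (∀ j, m j < q ^ (A j)) → boxCount q D A m = 1) :
    (∀ A m : Fin n → ℕ, (∀ j, A j ≤ s) → (∑ j, A j) ≤ k →
        (∀ j, m j < q ^ (A j)) → boxCount q D A m = q ^ (k - ∑ j, A j)) ∧
    (∀ A m : Fin n → ℕ, (∀ j, A j ≤ s) → k < (∑ j, A j) →
        (∀ j, m j < q ^ (A j)) → boxCount q D A m ≤ 1) ∧
    (∀ A m : Fin n → ℕ, (∑ j, A j) = s → (∀ j, m j < q ^ (A j)) →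
        boxCount q D A m = q ^ (k - s)) :=
  optimum_distribution_counts_and_net_general hq hsk hkn D hcube hopt
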